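/- Let G be an n-vertex, s-choosable graph with χ_flex(G) = m and n ≥ 2, and set l = ⌈n/ρ(G)⌉. Let H be the join of two vertex-disjoint copies of G. Then for any real r > 2, χ_flex(H) ≤ max{ ⌈l + log₂(2n−l)/(1−H(1/r))⌉, ⌈r(s−1) + l⌉, m }, where H(p) = −p log₂ p − (1−p) log₂(1−p) is the binary entropy function. In particular, H is (k, 1/(2ρ(G)))-flexible for k equal to this maximum. -/

import Mathlib

open SimpleGraph Finset

variable {V : Type*}

/-- A proper list coloring: colors chosen from lists, adjacent vertices differ. -/
def ProperListColoring (G : SimpleGraph V) (L : V → Finset ℕ) (f : V → ℕ) : Prop :=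
  (∀ v, f v ∈ L v) ∧ ∀ ⦃u w⦄, G.Adj u w → f u ≠ f w

/-- The triple (G,L,r) with request domain D is ε-satisfiable. -/
def Satisfiable (G : SimpleGraph V) (L : V → Finset ℕ) (D : Finset V) (r : V → ℕ)
    (ε : ℝ) : Prop :=
  ∃ f : V → ℕ, ProperListColoring G L f ∧
    ε * (D.card : ℝ) ≤ ((D.filter fun v => f v = r v).card : ℝ)

/-- G is (k,ε)-flexible. -/
def Flexible (G : SimpleGraph V) (k : ℕ) (ε : ℝ) : Prop :=
  ∀ (L : V → Finset ℕ), (∀ v, (L v).card = k) →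
    ∀ (D : Finset V) (r : V → ℕ), D.Nonempty → (∀ v ∈ D, r v ∈ L v) →
      Satisfiable G L D r ε

/-- Independence number of the subgraph induced on `S`. -/
noncomputable def indepNumOn (G : SimpleGraph V) (S : Finset V) : ℕ := by
  classical
  exact (S.powerset.filter fun I => ∀ u ∈ I, ∀ w ∈ I, ¬ G.Adj u w).sup Finset.card

/-- The Hall ratio of a graph. -/
noncomputable def hallRatio (G : SimpleGraph V) [Fintype V] : ℝ :=
  sSup {x : ℝ | ∃ S : Finset V, S.Nonempty ∧ x = (S.card : ℝ) / (indepNumOn G S : ℝ)}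

/-- The list flexibility number: least k such that G is (k, 1/ρ(G))-flexible. -/
noncomputable def flexNumber (G : SimpleGraph V) [Fintype V] : ℕ :=
  sInf {k | Flexible G k (1 / hallRatio G)}

/-- d-degeneracy via an ordering. -/
def Degenerate (G : SimpleGraph V) (d : ℕ) : Prop :=
  ∃ f : V → ℕ, Function.Injective f ∧ ∀ v, ({u | G.Adj v u ∧ f u < f v}).ncard ≤ d

/-- s-choosability. -/
def Choosable (G : SimpleGraph V) (s : ℕ) : Prop :=
  ∀ L : V → Finset ℕ, (∀ v, (L v).card = s) → ∃ f, ProperListColoring G L f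

/-- List chromatic number. -/
noncomputable def listChromNum (G : SimpleGraph V) : ℕ := sInf {s | Choosable G s}

/-- Chromatic number as a natural number. -/
noncomputable def chromNat (G : SimpleGraph V) : ℕ := G.chromaticNumber.toNat

/-- The square of a graph. -/
def square (G : SimpleGraph V) : SimpleGraph V :=
  SimpleGraph.fromRel (fun u w => G.Adj u w ∨ ∃ x, G.Adj u x ∧ G.Adj x w)

/-- The join of two disjoint copies of the same graph. -/
def joinCopies (G : SimpleGraph V) : SimpleGraph (V ⊕ V) where
  Adj x y := match x, y with
    | Sum.inl u, Sum.inl w => G.Adj u w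
    | Sum.inr u, Sum.inr w => G.Adj u w
    | _, _ => True
  symm := ⟨by rintro (u|u) (w|w) h <;> first | exact h.symm | trivial⟩
  loopless := ⟨by rintro (u|u) h <;> exact G.irrefl h⟩

/-- The list packing number. -/
noncomputable def listPackingNumber (G : SimpleGraph V) : ℕ :=
  sInf {k | 0 < k ∧ ∀ L : V → Finset ℕ, (∀ v, (L v).card = k) →
    ∃ f : Fin k → V → ℕ, (∀ i, ProperListColoring G L (f i)) ∧
      ∀ i j, i ≠ j → ∀ v, f i v ≠ f j v}

/-- Binary entropy function. -/
noncomputable def binEnt (p : ℝ) : ℝ :=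
  -p * Real.logb 2 p - (1 - p) * Real.logb 2 (1 - p)



/-! ### Auxiliary lemmas -/

set_option linter.unusedSectionVars false
set_option linter.unreachableTactic false
set_option linter.unusedTactic false
set_option maxHeartbeats 1600000

section Aux

lemma indep_card_le_indepNumOn (G : SimpleGraph V) {S I : Finset V}
    (hIS : I ⊆ S) (hind : ∀ u ∈ I, ∀ w ∈ I, ¬ G.Adj u w) :
    I.card ≤ indepNumOn G S := by
  classical
  unfold indepNumOn
  refine Finset.le_sup ?_
  simp only [Finset.mem_filter, Finset.mem_powerset]
  exact ⟨hIS, hind⟩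

lemma exists_indep_eq_indepNumOn (G : SimpleGraph V) (S : Finset V) :
    ∃ I ⊆ S, (∀ u ∈ I, ∀ w ∈ I, ¬ G.Adj u w) ∧ I.card = indepNumOn G S := by
  classical
  unfold indepNumOn
  have hne : (S.powerset.filter fun I => ∀ u ∈ I, ∀ w ∈ I, ¬ G.Adj u w).Nonempty := by
    refine ⟨∅, ?_⟩
    simp
  obtain ⟨I, hI, hsup⟩ := Finset.exists_mem_eq_sup _ hne Finset.card
  simp only [Finset.mem_filter, Finset.mem_powerset] at hI
  exact ⟨I, hI.1, hI.2, hsup.symm⟩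

lemma one_le_indepNumOn (G : SimpleGraph V) {S : Finset V} (hS : S.Nonempty) :
    1 ≤ indepNumOn G S := by
  obtain ⟨v, hv⟩ := hS
  have := indep_card_le_indepNumOn G (I := {v}) (by simpa using hv)
    (by intro u hu w hw; simp at hu hw; subst hu; subst hw; exact G.irrefl)
  simpa using this

lemma indepNumOn_le_card (G : SimpleGraph V) (S : Finset V) :
    indepNumOn G S ≤ S.card := by
  classical
  unfold indepNumOn
  refine Finset.sup_le fun I hI => ?_
  simp only [Finset.mem_filter, Finset.mem_powerset] at hI
  exact Finset.card_le_card hI.1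

variable [Fintype V]

lemma hallRatioSet_nonempty (G : SimpleGraph V) [Nonempty V] :
    {x : ℝ | ∃ S : Finset V, S.Nonempty ∧ x = (S.card : ℝ) / (indepNumOn G S : ℝ)}.Nonempty := by
  obtain ⟨v⟩ := ‹Nonempty V›
  exact ⟨_, ⟨{v}, ⟨v, by simp⟩, rfl⟩⟩

lemma hallRatioSet_bddAbove (G : SimpleGraph V) :
    BddAbove {x : ℝ | ∃ S : Finset V, S.Nonempty ∧ x = (S.card : ℝ) / (indepNumOn G S : ℝ)} := by
  refine ⟨Fintype.card V, fun x hx => ?_⟩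
  obtain ⟨S, hS, rfl⟩ := hx
  have h1 : (1 : ℝ) ≤ (indepNumOn G S : ℝ) := by
    exact_mod_cast one_le_indepNumOn G hS
  calc (S.card : ℝ) / (indepNumOn G S : ℝ) ≤ (S.card : ℝ) / 1 :=
        div_le_div_of_nonneg_left (by positivity) (by norm_num) h1
    _ = (S.card : ℝ) := by ring
    _ ≤ (Fintype.card V : ℝ) := by exact_mod_cast Finset.card_le_univ S

lemma one_le_hallRatio (G : SimpleGraph V) [Nonempty V] : 1 ≤ hallRatio G := by
  obtain ⟨v⟩ := ‹Nonempty V›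
  have hmem : (1 : ℝ) ∈ {x : ℝ | ∃ S : Finset V, S.Nonempty ∧
      x = (S.card : ℝ) / (indepNumOn G S : ℝ)} := by
    refine ⟨{v}, ⟨v, by simp⟩, ?_⟩
    have h1 : indepNumOn G {v} = 1 := by
      refine le_antisymm (by simpa using indepNumOn_le_card G {v}) (one_le_indepNumOn G ⟨v, by simp⟩)
    simp [h1]
  exact le_csSup (hallRatioSet_bddAbove G) hmem

lemma hallRatio_pos (G : SimpleGraph V) [Nonempty V] : 0 < hallRatio G :=
  lt_of_lt_of_le one_pos (one_le_hallRatio G)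

lemma hallRatio_le_card (G : SimpleGraph V) [Nonempty V] :
    hallRatio G ≤ (Fintype.card V : ℝ) := by
  refine csSup_le (hallRatioSet_nonempty G) fun x hx => ?_
  obtain ⟨S, hS, rfl⟩ := hx
  have h1 : (1 : ℝ) ≤ (indepNumOn G S : ℝ) := by exact_mod_cast one_le_indepNumOn G hS
  calc (S.card : ℝ) / (indepNumOn G S : ℝ) ≤ (S.card : ℝ) / 1 :=
        div_le_div_of_nonneg_left (by positivity) (by norm_num) h1
    _ = (S.card : ℝ) := by ring
    _ ≤ (Fintype.card V : ℝ) := by exact_mod_cast Finset.card_le_univ S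

lemma card_le_hallRatio_mul (G : SimpleGraph V) {S : Finset V} (hS : S.Nonempty) :
    (S.card : ℝ) ≤ hallRatio G * (indepNumOn G S : ℝ) := by
  have hx : (S.card : ℝ) / (indepNumOn G S : ℝ) ≤ hallRatio G :=
    le_csSup (hallRatioSet_bddAbove G) ⟨S, hS, rfl⟩
  have h1 : (0 : ℝ) < (indepNumOn G S : ℝ) := by
    exact_mod_cast one_le_indepNumOn G hS
  calc (S.card : ℝ) = (S.card : ℝ) / (indepNumOn G S : ℝ) * (indepNumOn G S : ℝ) := by
        field_simp
    _ ≤ hallRatio G * (indepNumOn G S : ℝ) := by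
        exact mul_le_mul_of_nonneg_right hx (le_of_lt h1)

end Aux


section Aux2

variable {V : Type*}

@[simp] lemma joinCopies_adj_inl_inl (G : SimpleGraph V) (u w : V) :
    (joinCopies G).Adj (Sum.inl u) (Sum.inl w) ↔ G.Adj u w := Iff.rfl

@[simp] lemma joinCopies_adj_inr_inr (G : SimpleGraph V) (u w : V) :
    (joinCopies G).Adj (Sum.inr u) (Sum.inr w) ↔ G.Adj u w := Iff.rfl

@[simp] lemma joinCopies_adj_inl_inr (G : SimpleGraph V) (u w : V) :
    (joinCopies G).Adj (Sum.inl u) (Sum.inr w) := trivial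

@[simp] lemma joinCopies_adj_inr_inl (G : SimpleGraph V) (u w : V) :
    (joinCopies G).Adj (Sum.inr u) (Sum.inl w) := trivial

lemma indepNumOn_joinCopies (G : SimpleGraph V) [DecidableEq V] (A : Finset V) :
    indepNumOn (joinCopies G)
      ((A.map ⟨Sum.inl, Sum.inl_injective⟩) ∪ (A.map ⟨Sum.inr, Sum.inr_injective⟩)) =
      indepNumOn G A := by
  classical
  set S' := (A.map ⟨Sum.inl, Sum.inl_injective⟩) ∪ (A.map ⟨Sum.inr, Sum.inr_injective⟩) with hS'
  apply le_antisymm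
  · obtain ⟨I, hIS, hind, hcard⟩ := exists_indep_eq_indepNumOn (joinCopies G) S'
    rw [← hcard]
    set I₁ : Finset V := I.preimage Sum.inl Sum.inl_injective.injOn with hI₁
    set I₂ : Finset V := I.preimage Sum.inr Sum.inr_injective.injOn with hI₂
    have hmem₁ : ∀ a, a ∈ I₁ ↔ Sum.inl a ∈ I := fun a => Finset.mem_preimage
    have hmem₂ : ∀ a, a ∈ I₂ ↔ Sum.inr a ∈ I := fun a => Finset.mem_preimage
    have hIeq : I = (I₁.map ⟨Sum.inl, Sum.inl_injective⟩) ∪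
        (I₂.map ⟨Sum.inr, Sum.inr_injective⟩) := by
      ext x
      rcases x with a | a <;> simp [hmem₁, hmem₂]
    have hI₁A : I₁ ⊆ A := by
      intro a ha
      have h := hIS ((hmem₁ a).1 ha)
      simp [hS'] at h
      exact h
    have hI₂A : I₂ ⊆ A := by
      intro a ha
      have h := hIS ((hmem₂ a).1 ha)
      simp [hS'] at h
      exact h
    have hind₁ : ∀ u ∈ I₁, ∀ w ∈ I₁, ¬ G.Adj u w := by
      intro u hu w hw h
      exact hind _ ((hmem₁ u).1 hu) _ ((hmem₁ w).1 hw) h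
    have hind₂ : ∀ u ∈ I₂, ∀ w ∈ I₂, ¬ G.Adj u w := by
      intro u hu w hw h
      exact hind _ ((hmem₂ u).1 hu) _ ((hmem₂ w).1 hw) h
    have hcardI : I.card = I₁.card + I₂.card := by
      rw [hIeq, Finset.card_union_of_disjoint, Finset.card_map, Finset.card_map]
      simp [Finset.disjoint_left]
    by_cases h2 : I₂ = ∅
    · have h := indep_card_le_indepNumOn G hI₁A hind₁
      have hc2 : I₂.card = 0 := by simp [h2]
      omega
    · have hne₂ : I₂.Nonempty := Finset.nonempty_iff_ne_empty.2 h2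
      have h1 : I₁ = ∅ := by
        by_contra h1
        obtain ⟨u, hu⟩ := Finset.nonempty_iff_ne_empty.2 h1
        obtain ⟨w, hw⟩ := hne₂
        exact hind _ ((hmem₁ u).1 hu) _ ((hmem₂ w).1 hw) trivial
      have h := indep_card_le_indepNumOn G hI₂A hind₂
      have hc1 : I₁.card = 0 := by simp [h1]
      omega
  · obtain ⟨I, hIA, hind, hcard⟩ := exists_indep_eq_indepNumOn G A
    rw [← hcard]
    have hmc : (I.map (⟨Sum.inl, Sum.inl_injective⟩ : V ↪ V ⊕ V)).card = I.card :=
      Finset.card_map _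
    rw [← hmc]
    refine indep_card_le_indepNumOn (joinCopies G) ?_ ?_
    · intro x hx
      simp only [Finset.mem_map, Function.Embedding.coeFn_mk] at hx
      obtain ⟨a, ha, rfl⟩ := hx
      simp [hS']
      exact hIA ha
    · intro u hu w hw
      simp only [Finset.mem_map, Function.Embedding.coeFn_mk] at hu hw
      obtain ⟨a, ha, rfl⟩ := hu
      obtain ⟨b, hb, rfl⟩ := hw
      exact hind a ha b hb

lemma two_mul_hallRatio_le (G : SimpleGraph V) [Fintype V] [Nonempty V] :
    2 * hallRatio G ≤ hallRatio (joinCopies G) := by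
  classical
  rw [mul_comm, ← le_div_iff₀ (by norm_num : (0:ℝ) < 2)]
  refine csSup_le (hallRatioSet_nonempty G) fun x hx => ?_
  obtain ⟨A, hA, rfl⟩ := hx
  classical
  set S' := (A.map ⟨Sum.inl, Sum.inl_injective⟩) ∪ (A.map ⟨Sum.inr, Sum.inr_injective⟩)
    with hS'
  have hcard : (S'.card : ℝ) = 2 * A.card := by
    rw [hS', Finset.card_union_of_disjoint (by simp [Finset.disjoint_left]),
      Finset.card_map, Finset.card_map]
    push_cast
    ring
  have hind := indepNumOn_joinCopies G A
  have hS'ne : S'.Nonempty := by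
    obtain ⟨a, ha⟩ := hA
    exact ⟨Sum.inl a, by simp [hS', ha]⟩
  have hmem : ((S'.card : ℝ) / (indepNumOn (joinCopies G) S' : ℝ)) ∈
      {x : ℝ | ∃ S : Finset (V ⊕ V), S.Nonempty ∧
        x = (S.card : ℝ) / (indepNumOn (joinCopies G) S : ℝ)} :=
    ⟨S', hS'ne, rfl⟩
  have hle := le_csSup (hallRatioSet_bddAbove (joinCopies G)) hmem
  rw [hind, hcard] at hle
  rw [le_div_iff₀ (by norm_num : (0:ℝ) < 2)]
  calc (A.card : ℝ) / (indepNumOn G A : ℝ) * 2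
      = 2 * (A.card : ℝ) / (indepNumOn G A : ℝ) := by ring
    _ ≤ hallRatio (joinCopies G) := hle

end Aux2


section Aux3

variable {V : Type*}

lemma choosable_of_card_le (G : SimpleGraph V) {s : ℕ} (hch : Choosable G s)
    (L : V → Finset ℕ) (h : ∀ v, s ≤ (L v).card) : ∃ f, ProperListColoring G L f := by
  classical
  choose Λ hΛsub hΛcard using fun v => Finset.exists_subset_card_eq (h v)
  obtain ⟨f, hf1, hf2⟩ := hch Λ hΛcard
  exact ⟨f, fun v => hΛsub v (hf1 v), hf2⟩

lemma one_le_of_choosable [Nonempty V] {G : SimpleGraph V} {s : ℕ}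
    (hch : Choosable G s) : 1 ≤ s := by
  by_contra h
  push_neg at h
  interval_cases s
  obtain ⟨f, hf1, _⟩ := hch (fun _ => ∅) (fun _ => rfl)
  obtain ⟨v⟩ := ‹Nonempty V›
  simpa using hf1 v

lemma flexible_anti (G : SimpleGraph V) {k : ℕ} {ε ε' : ℝ} (h : ε' ≤ ε)
    (hf : Flexible G k ε) : Flexible G k ε' := by
  intro L hL D r hD hr
  obtain ⟨f, hf1, hf2⟩ := hf L hL D r hD hr
  refine ⟨f, hf1, le_trans ?_ hf2⟩
  exact mul_le_mul_of_nonneg_right h (by positivity)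

/-- Greedy choice of distinct representatives. -/
lemma exists_injOn_mem_of_card_le [DecidableEq V] (L : V → Finset ℕ) :
    ∀ Q : Finset V, (∀ q ∈ Q, Q.card ≤ (L q).card) →
      ∃ g : V → ℕ, Set.InjOn g Q ∧ ∀ q ∈ Q, g q ∈ L q := by
  classical
  intro Q
  induction Q using Finset.cons_induction with
  | empty => exact fun _ => ⟨fun _ => 0, by simp, by simp⟩
  | cons a Q' ha ih =>
    intro hcard
    have hQ' : ∀ q ∈ Q', Q'.card ≤ (L q).card := by
      intro q hq
      have := hcard q (Finset.mem_cons_of_mem hq)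
      rw [Finset.card_cons] at this
      omega
    obtain ⟨g, hginj, hgmem⟩ := ih hQ'
    have hLa : Q'.card + 1 ≤ (L a).card := by
      have := hcard a (Finset.mem_cons_self a Q')
      rwa [Finset.card_cons] at this
    have hne : (L a \ Q'.image g).Nonempty := by
      rw [← Finset.card_pos]
      have h1 : (Q'.image g).card ≤ Q'.card := Finset.card_image_le
      have h2 : (L a).card - (Q'.image g).card ≤ (L a \ Q'.image g).card :=
        Finset.le_card_sdiff _ _
      omega
    obtain ⟨c, hc⟩ := hne
    rw [Finset.mem_sdiff] at hc
    refine ⟨Function.update g a c, ?_, ?_⟩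
    · intro x hx y hy hxy
      simp only [Finset.coe_cons, Set.mem_insert_iff, Finset.mem_coe] at hx hy
      rcases hx with rfl | hx <;> rcases hy with rfl | hy
      · rfl
      · exfalso
        have hya : y ≠ x := by rintro rfl; exact ha hy
        rw [Function.update_self, Function.update_of_ne hya] at hxy
        exact hc.2 (Finset.mem_image.2 ⟨y, hy, hxy.symm⟩)
      · exfalso
        have hxa : x ≠ y := by rintro rfl; exact ha hx
        rw [Function.update_self, Function.update_of_ne hxa] at hxy
        exact hc.2 (Finset.mem_image.2 ⟨x, hx, hxy⟩)
      · have hxa : x ≠ a := by rintro rfl; exact ha hx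
        have hya : y ≠ a := by rintro rfl; exact ha hy
        rw [Function.update_of_ne hxa, Function.update_of_ne hya] at hxy
        exact hginj hx hy hxy
    · intro q hq
      rcases Finset.mem_cons.1 hq with rfl | hq2
      · rw [Function.update_self]; exact hc.1
      · have hqa : q ≠ a := by rintro rfl; exact ha hq2
        rw [Function.update_of_ne hqa]
        exact hgmem q hq2

lemma binEnt_eq_binEntropy_div (p : ℝ) : binEnt p = Real.binEntropy p / Real.log 2 := by
  unfold binEnt Real.binEntropy Real.logb
  rw [Real.log_inv, Real.log_inv]
  ring

lemma binEnt_nonneg {p : ℝ} (h0 : 0 ≤ p) (h1 : p ≤ 1) : 0 ≤ binEnt p := by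
  rw [binEnt_eq_binEntropy_div]
  exact div_nonneg (Real.binEntropy_nonneg h0 h1) (Real.log_nonneg one_le_two)

lemma binEnt_lt_one {p : ℝ} (hne : p ≠ 2⁻¹) : binEnt p < 1 := by
  rw [binEnt_eq_binEntropy_div, div_lt_one (Real.log_pos one_lt_two)]
  exact Real.binEntropy_lt_log_two.2 hne

end Aux3


section Aux4

/-- Entropy bound for partial binomial sums. -/
lemma sum_choose_lt_rpow (N s : ℕ) (hs : 1 ≤ s) (hsN : s ≤ N) (q : ℝ)
    (hq0 : 0 < q) (hqh : q ≤ 1 / 2) (hmean : (s : ℝ) - 1 ≤ q * N) :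
    (∑ j ∈ Finset.range s, (N.choose j : ℝ)) < (2 : ℝ) ^ ((N : ℝ) * binEnt q) := by
  have hb0 : (0:ℝ) < 1 - q := by linarith
  have hab : q ≤ 1 - q := by linarith
  -- the binomial expansion of (q+(1-q))^N = 1
  have hbinom : ∑ j ∈ Finset.range (N + 1),
      q ^ j * (1-q) ^ (N - j) * (N.choose j : ℝ) = 1 := by
    rw [← add_pow]
    norm_num
  -- strict: partial sum < 1
  have hstrict : ∑ j ∈ Finset.range s, q ^ j * (1-q) ^ (N - j) * (N.choose j : ℝ) < 1 := by
    have hsub : Finset.range s ⊆ Finset.range (N+1) := Finset.range_subset_range.2 (by omega)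
    refine lt_of_lt_of_eq ?_ hbinom
    refine Finset.sum_lt_sum_of_subset hsub (i := N) ?_ ?_ ?_ ?_
    · simp
    · rw [Finset.mem_range]; omega
    · have h1 : (0:ℝ) < q ^ N := pow_pos hq0 N
      have h2 : (0:ℝ) < ((1:ℝ)-q) ^ (N - N) := pow_pos hb0 _
      have hch : (0:ℝ) < (N.choose N : ℝ) := by simp
      positivity
    · intro j _ _
      positivity
  -- lower bound each term
  have hterm : ∀ j ∈ Finset.range s,
      (N.choose j : ℝ) * (q ^ (s - 1) * (1-q) ^ (N - (s - 1))) ≤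
        q ^ j * (1-q) ^ (N - j) * (N.choose j : ℝ) := by
    intro j hj
    rw [Finset.mem_range] at hj
    have hj1 : j ≤ s - 1 := by omega
    have e1 : s - 1 = j + (s - 1 - j) := by omega
    have e2 : N - j = (N - (s - 1)) + (s - 1 - j) := by omega
    rw [mul_comm]
    refine mul_le_mul_of_nonneg_right ?_ (by positivity)
    calc q ^ (s-1) * (1-q) ^ (N - (s-1))
        = (q ^ j * (1-q) ^ (N - (s-1))) * q ^ (s-1-j) := by
          rw [show q ^ (s-1) = q ^ j * q ^ (s-1-j) by rw [← pow_add]; congr 1 <;> omega]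
          ring
      _ ≤ (q ^ j * (1-q) ^ (N - (s-1))) * (1-q) ^ (s-1-j) := by
          refine mul_le_mul_of_nonneg_left ?_ (by positivity)
          exact pow_le_pow_left₀ (le_of_lt hq0) hab _
      _ = q ^ j * (1-q) ^ (N - j) := by
          rw [show (1-q) ^ (N-j) = (1-q) ^ (N-(s-1)) * (1-q) ^ (s-1-j) by
            rw [← pow_add]; congr 1 <;> omega]
          ring
  have hpos : (0:ℝ) < q ^ (s - 1) * (1-q) ^ (N - (s - 1)) := by positivity
  have hS1 : (∑ j ∈ Finset.range s, (N.choose j : ℝ)) *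
      (q ^ (s - 1) * (1-q) ^ (N - (s - 1))) < 1 := by
    rw [Finset.sum_mul]
    exact lt_of_le_of_lt (Finset.sum_le_sum hterm) hstrict
  have hS2 : (∑ j ∈ Finset.range s, (N.choose j : ℝ)) <
      (q ^ (s - 1) * (1-q) ^ (N - (s - 1)))⁻¹ := by
    rw [inv_eq_one_div, lt_div_iff₀ hpos]
    exact hS1
  refine lt_of_lt_of_le hS2 ?_
  -- rewrite powers in base 2
  have hq2 : q = (2:ℝ) ^ Real.logb 2 q := (Real.rpow_logb two_pos (by norm_num) hq0).symm
  have hb2 : (1-q) = (2:ℝ) ^ Real.logb 2 (1-q) :=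
    (Real.rpow_logb two_pos (by norm_num) hb0).symm
  set la := Real.logb 2 q with hla
  set lb := Real.logb 2 (1-q) with hlb
  have hpowa : ∀ k : ℕ, q ^ k = (2:ℝ) ^ (la * (k:ℝ)) := by
    intro k
    rw [Real.rpow_mul (by norm_num), Real.rpow_natCast, ← hq2]
  have hpowb : ∀ k : ℕ, (1-q) ^ k = (2:ℝ) ^ (lb * (k:ℝ)) := by
    intro k
    rw [Real.rpow_mul (by norm_num), Real.rpow_natCast, ← hb2]
  rw [hpowa, hpowb, ← Real.rpow_add (by norm_num : (0:ℝ) < 2),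
    ← Real.rpow_neg_one ((2:ℝ) ^ _), ← Real.rpow_mul (by norm_num : (0:ℝ) ≤ 2)]
  rw [Real.rpow_le_rpow_left_iff (by norm_num : (1:ℝ) < 2)]
  -- the exponent inequality
  have hc1 : ((s - 1 : ℕ) : ℝ) = (s:ℝ) - 1 := by
    push_cast [Nat.cast_sub hs]
    ring
  have hc2 : ((N - (s - 1) : ℕ) : ℝ) = (N:ℝ) - ((s:ℝ) - 1) := by
    have h1 : s - 1 ≤ N := by omega
    push_cast [Nat.cast_sub h1, Nat.cast_sub hs]
    ring
  have hlab : la ≤ lb := by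
    rw [hla, hlb]
    exact (Real.logb_le_logb one_lt_two hq0 hb0).2 hab
  have hEnt : binEnt q = -q * la - (1 - q) * lb := rfl
  rw [hc1, hc2, hEnt]
  nlinarith [mul_nonneg (by linarith : (0:ℝ) ≤ q * (N:ℝ) - ((s:ℝ) - 1))
    (by linarith : (0:ℝ) ≤ lb - la)]

end Aux4


section Aux5

open Finset

/-- Counting subsets whose intersection with `M` is small. -/
lemma card_filter_inter_lt (U M : Finset ℕ) (hMU : M ⊆ U) (s : ℕ) :
    (U.powerset.filter fun A => (M ∩ A).card < s).card ≤
      (∑ j ∈ Finset.range s, (M.card).choose j) * 2 ^ (U.card - M.card) := by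
  classical
  have hsub : (U.powerset.filter fun A => (M ∩ A).card < s) ⊆
      (M.powerset.filter fun B => B.card < s).biUnion
        (fun B => U.powerset.filter fun A => M ∩ A = B) := by
    intro A hA
    simp only [mem_filter, mem_powerset, mem_biUnion] at hA ⊢
    exact ⟨M ∩ A, ⟨inter_subset_left, hA.2⟩, hA.1, rfl⟩
  have hfiber : ∀ B : Finset ℕ,
      (U.powerset.filter fun A => M ∩ A = B).card ≤ 2 ^ (U.card - M.card) := by
    intro B
    have hinj : ∀ A₁ ∈ (U.powerset.filter fun A => M ∩ A = B),
        ∀ A₂ ∈ (U.powerset.filter fun A => M ∩ A = B), A₁ \ M = A₂ \ M → A₁ = A₂ := by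
      intro A₁ h₁ A₂ h₂ h
      simp only [mem_filter, mem_powerset] at h₁ h₂
      have e1 : A₁ = (M ∩ A₁) ∪ (A₁ \ M) := by
        ext x
        simp only [mem_union, mem_inter, mem_sdiff]
        tauto
      have e2 : A₂ = (M ∩ A₂) ∪ (A₂ \ M) := by
        ext x
        simp only [mem_union, mem_inter, mem_sdiff]
        tauto
      rw [e1, e2, h₁.2, h₂.2, h]
    have hmaps : ∀ A ∈ (U.powerset.filter fun A => M ∩ A = B),
        A \ M ∈ (U \ M).powerset := by
      intro A hA
      simp only [mem_filter, mem_powerset] at hA ⊢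
      exact sdiff_subset_sdiff hA.1 le_rfl
    have := Finset.card_le_card_of_injOn (fun A => A \ M) hmaps
      (fun A₁ h₁ A₂ h₂ h => hinj A₁ h₁ A₂ h₂ h)
    calc (U.powerset.filter fun A => M ∩ A = B).card ≤ ((U \ M).powerset).card := this
      _ = 2 ^ (U \ M).card := card_powerset _
      _ = 2 ^ (U.card - M.card) := by rw [card_sdiff_of_subset hMU]
  have hcount : (M.powerset.filter fun B => B.card < s).card ≤
      ∑ j ∈ Finset.range s, (M.card).choose j := by
    have he : (M.powerset.filter fun B => B.card < s) =
        (Finset.range s).biUnion (fun j => M.powersetCard j) := by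
      ext B
      simp only [mem_filter, mem_powerset, mem_biUnion, Finset.mem_range,
        Finset.mem_powersetCard]
      constructor
      · rintro ⟨h1, h2⟩; exact ⟨B.card, h2, h1, rfl⟩
      · rintro ⟨j, hj, h1, rfl⟩; exact ⟨h1, hj⟩
    rw [he]
    calc ((Finset.range s).biUnion (fun j => M.powersetCard j)).card ≤
        ∑ j ∈ Finset.range s, (M.powersetCard j).card := card_biUnion_le
      _ = ∑ j ∈ Finset.range s, (M.card).choose j := by
          refine Finset.sum_congr rfl fun j _ => ?_
          exact card_powersetCard j M
  calc (U.powerset.filter fun A => (M ∩ A).card < s).card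
      ≤ ((M.powerset.filter fun B => B.card < s).biUnion
          (fun B => U.powerset.filter fun A => M ∩ A = B)).card := card_le_card hsub
    _ ≤ ∑ B ∈ (M.powerset.filter fun B => B.card < s),
          (U.powerset.filter fun A => M ∩ A = B).card := card_biUnion_le
    _ ≤ ∑ _B ∈ (M.powerset.filter fun B => B.card < s), 2 ^ (U.card - M.card) :=
        Finset.sum_le_sum fun B _ => hfiber B
    _ = (M.powerset.filter fun B => B.card < s).card * 2 ^ (U.card - M.card) := by
        rw [Finset.sum_const, smul_eq_mul]
    _ ≤ (∑ j ∈ Finset.range s, (M.card).choose j) * 2 ^ (U.card - M.card) :=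
        Nat.mul_le_mul_right _ hcount

/-- Counting subsets whose complement-intersection with `M` is small. -/
lemma card_filter_sdiff_lt (U M : Finset ℕ) (hMU : M ⊆ U) (s : ℕ) :
    (U.powerset.filter fun A => (M \ A).card < s).card ≤
      (∑ j ∈ Finset.range s, (M.card).choose j) * 2 ^ (U.card - M.card) := by
  classical
  refine le_trans ?_ (card_filter_inter_lt U M hMU s)
  refine Finset.card_le_card_of_injOn (fun A => U \ A) ?_ ?_
  · intro A hA
    simp only [mem_coe, mem_filter, mem_powerset] at hA ⊢
    refine ⟨sdiff_subset, ?_⟩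
    have he : M ∩ (U \ A) = M \ A := by
      ext x
      simp only [mem_inter, mem_sdiff]
      constructor
      · rintro ⟨h1, _, h3⟩; exact ⟨h1, h3⟩
      · rintro ⟨h1, h2⟩; exact ⟨h1, hMU h1, h2⟩
    rw [he]
    exact hA.2
  · intro A₁ h₁ A₂ h₂ h
    simp only [Finset.coe_filter, Set.mem_setOf_eq, mem_powerset] at h₁ h₂
    have e1 : U \ (U \ A₁) = A₁ := Finset.sdiff_sdiff_eq_self h₁.1
    have e2 : U \ (U \ A₂) = A₂ := Finset.sdiff_sdiff_eq_self h₂.1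
    have h' : U \ A₁ = U \ A₂ := h
    calc A₁ = U \ (U \ A₁) := e1.symm
      _ = U \ (U \ A₂) := by rw [h']
      _ = A₂ := e2

end Aux5


section Aux6

open Finset

/-- Existence of a good split of the colors into a left pool and a right pool. -/
lemma exists_good_split {V : Type*} [Fintype V] [DecidableEq V]
    (n s K lv : ℕ) (hn : Fintype.card V = n) (hn1 : 1 ≤ n)
    (r : ℝ) (hr : 2 < r) (hs1 : 1 ≤ s)
    (hKls : lv + s ≤ K)
    (hK2 : r * ((s:ℝ) - 1) + lv ≤ K)
    (hK1 : Real.logb 2 (2*(n:ℝ) - lv) ≤ ((K:ℝ) - lv) * (1 - binEnt (1/r)))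
    (hln : lv ≤ n)
    (L : V ⊕ V → Finset ℕ) (hL : ∀ v, (L v).card = K)
    (C : Finset ℕ) (hC : C.card ≤ lv)
    (P : Finset V) (hP : P.card = lv) :
    ∃ A : Finset ℕ, (∀ v : V, v ∉ P → s ≤ (((L (Sum.inl v)) \ C) ∩ A).card) ∧
      (∀ w : V, s ≤ (((L (Sum.inr w)) \ C) \ A).card) := by
  classical
  set U : Finset ℕ := (Finset.univ : Finset (V ⊕ V)).biUnion L with hU
  have hLU : ∀ u : V ⊕ V, L u ⊆ U := fun u =>
    Finset.subset_biUnion_of_mem L (Finset.mem_univ u)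
  set T : Finset (V ⊕ V) :=
    ((Finset.univ \ P).map ⟨Sum.inl, Sum.inl_injective⟩) ∪
      (Finset.univ.map ⟨Sum.inr, Sum.inr_injective⟩) with hT
  have hTcard : T.card = 2 * n - lv := by
    rw [hT, Finset.card_union_of_disjoint (by simp [Finset.disjoint_left]),
      Finset.card_map, Finset.card_map, Finset.card_sdiff_of_subset (Finset.subset_univ P),
      Finset.card_univ, hn, hP]
    omega
  set cnt : V ⊕ V → Finset ℕ → ℕ := fun u A =>
    Sum.elim (fun v => ((L (Sum.inl v) \ C) ∩ A).card)
      (fun w => ((L (Sum.inr w) \ C) \ A).card) u with hcnt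
  set badSet : V ⊕ V → Finset (Finset ℕ) := fun u =>
    U.powerset.filter (fun A => cnt u A < s) with hbadSet
  -- numeric facts about binEnt
  have hq0 : (0:ℝ) < 1/r := by positivity
  have hqh : 1/r < 1/2 := by
    apply one_div_lt_one_div_of_lt <;> linarith
  have hHb0 : 0 ≤ binEnt (1/r) := binEnt_nonneg (le_of_lt hq0) (by linarith)
  have hHb1 : binEnt (1/r) < 1 := binEnt_lt_one (by rw [← one_div]; exact ne_of_lt hqh)
  -- the per-vertex bound
  have hmain : ∀ u ∈ T, (badSet u).card * (2 * n - lv) < 2 ^ U.card := by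
    intro u _
    set M : Finset ℕ := L u \ C with hM
    have hMU : M ⊆ U := fun x hx => hLU u (Finset.mem_sdiff.1 hx).1
    have hm1 : K - lv ≤ M.card := by
      have h1 : (L u).card - C.card ≤ M.card := Finset.le_card_sdiff _ _
      have h2 := hL u
      omega
    have hm2 : M.card ≤ U.card := Finset.card_le_card hMU
    have hsm : s ≤ M.card := by omega
    -- the cardinality of the bad set
    have hbadcard : (badSet u).card ≤
        (∑ j ∈ Finset.range s, (M.card).choose j) * 2 ^ (U.card - M.card) := by
      rcases u with v | w
      · exact card_filter_inter_lt U M hMU s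
      · exact card_filter_sdiff_lt U M hMU s
    -- the real-number estimate
    have hKlv : ((K - lv : ℕ) : ℝ) = (K:ℝ) - lv := by
      have : lv ≤ K := by omega
      push_cast [Nat.cast_sub this]
      ring
    have hmean : (s:ℝ) - 1 ≤ (1/r) * M.card := by
      have h1 : r * ((s:ℝ) - 1) ≤ (K:ℝ) - lv := by linarith
      have h2 : (K:ℝ) - lv ≤ (M.card : ℝ) := by
        rw [← hKlv]
        exact_mod_cast hm1
      rw [one_div, inv_mul_eq_div, le_div_iff₀ (by linarith : (0:ℝ) < r)]
      nlinarith
    have hchoose : (∑ j ∈ Finset.range s, ((M.card).choose j : ℝ)) <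
        (2:ℝ) ^ ((M.card : ℝ) * binEnt (1/r)) :=
      sum_choose_lt_rpow M.card s hs1 hsm (1/r) hq0 (le_of_lt hqh) hmean
    have hcard_small : ((2 * n - lv : ℕ) : ℝ) ≤
        (2:ℝ) ^ ((M.card : ℝ) * (1 - binEnt (1/r))) := by
      have hpos : (0:ℝ) < 2 * (n:ℝ) - lv := by
        have : (lv:ℝ) ≤ n := by exact_mod_cast hln
        have : (1:ℝ) ≤ n := by exact_mod_cast hn1
        linarith
      have hcast : ((2 * n - lv : ℕ) : ℝ) = 2 * (n:ℝ) - lv := by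
        have : lv ≤ 2 * n := by omega
        push_cast [Nat.cast_sub this]
        ring
      rw [hcast]
      have hlogle : Real.logb 2 (2*(n:ℝ) - lv) ≤ (M.card : ℝ) * (1 - binEnt (1/r)) := by
        refine le_trans hK1 ?_
        have h2 : (K:ℝ) - lv ≤ (M.card : ℝ) := by
          rw [← hKlv]; exact_mod_cast hm1
        nlinarith
      calc 2*(n:ℝ) - lv = (2:ℝ) ^ Real.logb 2 (2*(n:ℝ) - lv) :=
            (Real.rpow_logb two_pos (by norm_num) hpos).symm
        _ ≤ (2:ℝ) ^ ((M.card : ℝ) * (1 - binEnt (1/r))) := by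
            exact Real.rpow_le_rpow_left_iff (by norm_num : (1:ℝ) < 2) |>.2 hlogle
    -- combine in ℝ
    have hreal : ((2 * n - lv : ℕ) : ℝ) *
        ((∑ j ∈ Finset.range s, ((M.card).choose j : ℝ)) * (2:ℝ) ^ ((U.card - M.card : ℕ):ℝ))
          < (2:ℝ) ^ ((U.card : ℕ) : ℝ) := by
      have hUM : ((U.card - M.card : ℕ) : ℝ) = (U.card : ℝ) - M.card := by
        push_cast [Nat.cast_sub hm2]
        ring
      have hchoose_nonneg : (0:ℝ) ≤ ∑ j ∈ Finset.range s, ((M.card).choose j : ℝ) := by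
        positivity
      have hstep : ((2 * n - lv : ℕ) : ℝ) *
          ((∑ j ∈ Finset.range s, ((M.card).choose j : ℝ)) *
            (2:ℝ) ^ ((U.card - M.card : ℕ):ℝ)) <
          (2:ℝ) ^ ((M.card : ℝ) * (1 - binEnt (1/r))) *
            ((2:ℝ) ^ ((M.card : ℝ) * binEnt (1/r)) * (2:ℝ) ^ ((U.card - M.card : ℕ):ℝ)) := by
        have hp1 : (0:ℝ) < (2:ℝ) ^ ((U.card - M.card : ℕ):ℝ) := Real.rpow_pos_of_pos two_pos _
        have hp2 : (0:ℝ) < (2:ℝ) ^ ((M.card : ℝ) * (1 - binEnt (1/r))) :=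
          Real.rpow_pos_of_pos two_pos _
        have hcard_pos : (0:ℝ) < ((2 * n - lv : ℕ) : ℝ) := by
          have : 1 ≤ 2 * n - lv := by omega
          exact_mod_cast Nat.lt_of_lt_of_le Nat.zero_lt_one this
        calc ((2 * n - lv : ℕ) : ℝ) *
            ((∑ j ∈ Finset.range s, ((M.card).choose j : ℝ)) *
              (2:ℝ) ^ ((U.card - M.card : ℕ):ℝ))
            ≤ (2:ℝ) ^ ((M.card : ℝ) * (1 - binEnt (1/r))) *
              ((∑ j ∈ Finset.range s, ((M.card).choose j : ℝ)) *
                (2:ℝ) ^ ((U.card - M.card : ℕ):ℝ)) := by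
              refine mul_le_mul_of_nonneg_right hcard_small ?_
              positivity
          _ < (2:ℝ) ^ ((M.card : ℝ) * (1 - binEnt (1/r))) *
              ((2:ℝ) ^ ((M.card : ℝ) * binEnt (1/r)) * (2:ℝ) ^ ((U.card - M.card : ℕ):ℝ)) := by
              refine mul_lt_mul_of_pos_left ?_ hp2
              exact mul_lt_mul_of_pos_right hchoose hp1
      refine lt_of_lt_of_le hstep ?_
      rw [← Real.rpow_add two_pos, ← Real.rpow_add two_pos]
      refine le_of_eq ?_
      congr 1
      rw [hUM]
      ring
    -- back to ℕ
    have hnat : (2 * n - lv) * ((∑ j ∈ Finset.range s, (M.card).choose j) *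
        2 ^ (U.card - M.card)) < 2 ^ U.card := by
      have h2 : ((2:ℝ) ^ ((U.card : ℕ) : ℝ)) = ((2 ^ U.card : ℕ) : ℝ) := by
        rw [Real.rpow_natCast]
        push_cast
        ring
      have h3 : ((2:ℝ) ^ ((U.card - M.card : ℕ) : ℝ)) = ((2 ^ (U.card - M.card) : ℕ) : ℝ) := by
        rw [Real.rpow_natCast]
        push_cast
        ring
      rw [h2, h3] at hreal
      have := hreal
      push_cast at this
      exact_mod_cast this
    calc (badSet u).card * (2 * n - lv)
        ≤ ((∑ j ∈ Finset.range s, (M.card).choose j) * 2 ^ (U.card - M.card)) *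
            (2 * n - lv) := Nat.mul_le_mul_right _ hbadcard
      _ = (2 * n - lv) * ((∑ j ∈ Finset.range s, (M.card).choose j) *
            2 ^ (U.card - M.card)) := by ring
      _ < 2 ^ U.card := hnat
  -- union bound
  have hTne : T.Nonempty := by
    rw [← Finset.card_pos, hTcard]
    omega
  have hsum : ∑ u ∈ T, (badSet u).card < 2 ^ U.card := by
    have h1 : ∑ u ∈ T, (badSet u).card * (2 * n - lv) < ∑ _u ∈ T, 2 ^ U.card :=
      Finset.sum_lt_sum_of_nonempty hTne hmain
    rw [Finset.sum_const, smul_eq_mul, hTcard, ← Finset.sum_mul] at h1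
    exact Nat.lt_of_mul_lt_mul_right (by rw [mul_comm (2 * n - lv)] at h1; exact h1)
  have hnotsub : ¬ (U.powerset ⊆ T.biUnion badSet) := by
    intro hsub
    have h1 : U.powerset.card ≤ (T.biUnion badSet).card := Finset.card_le_card hsub
    have h2 : (T.biUnion badSet).card ≤ ∑ u ∈ T, (badSet u).card := Finset.card_biUnion_le
    rw [Finset.card_powerset] at h1
    omega
  obtain ⟨A, hA⟩ := Finset.not_subset.1 hnotsub
  obtain ⟨hAU, hAbad⟩ := hA
  have hgood : ∀ u ∈ T, s ≤ cnt u A := by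
    intro u hu
    by_contra h
    push_neg at h
    exact hAbad (Finset.mem_biUnion.2 ⟨u, hu, Finset.mem_filter.2 ⟨hAU, h⟩⟩)
  refine ⟨A, ?_, ?_⟩
  · intro v hv
    have hmem : Sum.inl v ∈ T := by
      rw [hT]
      simp [hv]
    exact hgood _ hmem
  · intro w
    have hmem : Sum.inr w ∈ T := by
      rw [hT]
      simp
    exact hgood _ hmem

end Aux6


section Core

open Finset

lemma core_left {V : Type*} [Fintype V] [DecidableEq V] [Nonempty V] (G : SimpleGraph V)
    (n s K : ℕ) (hn : Fintype.card V = n) (hn2 : 2 ≤ n) (hch : Choosable G s)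
    (r : ℝ) (hr : 2 < r)
    (hK1 : (⌈(↑(⌈(n : ℝ) / hallRatio G⌉₊) : ℝ) +
      Real.logb 2 (2 * (n : ℝ) - ↑(⌈(n : ℝ) / hallRatio G⌉₊)) /
        (1 - binEnt (1 / r))⌉₊ : ℕ) ≤ K)
    (hK2 : (⌈r * ((s : ℝ) - 1) + ↑(⌈(n : ℝ) / hallRatio G⌉₊)⌉₊ : ℕ) ≤ K)
    (L : V ⊕ V → Finset ℕ) (hL : ∀ v, (L v).card = K)
    (D : Finset (V ⊕ V)) (req : V ⊕ V → ℕ) (hD : D.Nonempty)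
    (hreq : ∀ v ∈ D, req v ∈ L v)
    (hhalf : D.card ≤ 2 * (D.filter (fun x => x.isLeft)).card) :
    ∃ f, ProperListColoring (joinCopies G) L f ∧
      1 / (2 * hallRatio G) * (D.card : ℝ) ≤ ((D.filter fun v => f v = req v).card : ℝ) := by
  classical
  set ρ := hallRatio G with hρ
  have hρ1 : 1 ≤ ρ := one_le_hallRatio G
  have hρ0 : 0 < ρ := by linarith
  set lv := ⌈(n : ℝ) / ρ⌉₊ with hlv
  have hs1 : 1 ≤ s := one_le_of_choosable hch
  -- basic entropy facts
  have hq0 : (0:ℝ) < 1/r := by positivity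
  have hqh : 1/r < 1/2 := by apply one_div_lt_one_div_of_lt <;> linarith
  have hHb0 : 0 ≤ binEnt (1/r) := binEnt_nonneg (le_of_lt hq0) (by linarith)
  have hHb1 : binEnt (1/r) < 1 := binEnt_lt_one (by rw [← one_div]; exact ne_of_lt hqh)
  -- numeric facts about lv and K
  have hlv1 : 1 ≤ lv := Nat.one_le_ceil_iff.2 (by positivity)
  have hlvn : lv ≤ n := by
    rw [hlv]
    refine Nat.ceil_le.2 ?_
    exact div_le_self (by positivity) hρ1
  have hlog1 : 1 ≤ Real.logb 2 (2 * (n:ℝ) - lv) := by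
    have h2 : (2:ℝ) ≤ 2 * (n:ℝ) - lv := by
      have h3 : (lv:ℝ) ≤ n := by exact_mod_cast hlvn
      have h4 : (2:ℝ) ≤ n := by exact_mod_cast hn2
      linarith
    calc (1:ℝ) = Real.logb 2 2 := by simp
      _ ≤ Real.logb 2 (2 * (n:ℝ) - lv) :=
          (Real.logb_le_logb one_lt_two two_pos (by linarith)).2 h2
  have hK1r : (lv : ℝ) + Real.logb 2 (2 * (n : ℝ) - lv) / (1 - binEnt (1/r)) ≤ K := by
    refine le_trans (Nat.le_ceil _) ?_
    exact_mod_cast hK1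
  have hK2r : r * ((s : ℝ) - 1) + lv ≤ K := by
    refine le_trans (Nat.le_ceil _) ?_
    exact_mod_cast hK2
  have hdiv1 : 1 ≤ Real.logb 2 (2 * (n : ℝ) - lv) / (1 - binEnt (1/r)) := by
    rw [le_div_iff₀ (by linarith : (0:ℝ) < 1 - binEnt (1/r))]
    linarith
  have hKl1 : lv + 1 ≤ K := by
    have : (lv : ℝ) + 1 ≤ K := by linarith
    exact_mod_cast this
  have hKls : lv + s ≤ K := by
    rcases Nat.eq_or_lt_of_le hs1 with h | h
    · omega
    · have h2 : (2:ℝ) ≤ (s:ℝ) := by exact_mod_cast h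
      have : (lv : ℝ) + s ≤ K := by nlinarith
      exact_mod_cast this
  have hK1'' : Real.logb 2 (2*(n:ℝ) - lv) ≤ ((K:ℝ) - lv) * (1 - binEnt (1/r)) := by
    have hpos : (0:ℝ) < 1 - binEnt (1/r) := by linarith
    exact (div_le_iff₀ hpos).1 (by linarith)
  -- the left part of D
  set AD : Finset V := Finset.univ.filter (fun a => Sum.inl a ∈ D) with hAD
  have hADmap : AD.map ⟨Sum.inl, Sum.inl_injective⟩ = D.filter (fun x => x.isLeft) := by
    ext x
    rcases x with a | a <;> simp [hAD]
  have hADcard : AD.card = (D.filter (fun x => x.isLeft)).card := by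
    rw [← hADmap, Finset.card_map]
  have hhalf' : D.card ≤ 2 * AD.card := by rw [hADcard]; exact hhalf
  have hADne : AD.Nonempty := by
    rw [← Finset.card_pos]
    have := Finset.card_pos.2 hD
    omega
  -- the request independent set
  set t := ⌈(D.card : ℝ) / (2 * ρ)⌉₊ with ht
  have hD2n : D.card ≤ 2 * n := by
    have h1 := Finset.card_le_univ D
    rwa [Fintype.card_sum, hn, ← two_mul] at h1
  have ht1 : 1 ≤ t := by
    refine Nat.one_le_ceil_iff.2 ?_
    have := Finset.card_pos.2 hD
    positivity
  have htlv : t ≤ lv := by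
    refine Nat.ceil_le_ceil ?_
    rw [div_le_div_iff₀ (by positivity) hρ0]
    have h1 : (D.card : ℝ) ≤ 2 * n := by exact_mod_cast hD2n
    nlinarith
  have htα : t ≤ indepNumOn G AD := by
    refine Nat.ceil_le.2 ?_
    rw [div_le_iff₀ (by positivity)]
    have h1 : (AD.card : ℝ) ≤ ρ * indepNumOn G AD := card_le_hallRatio_mul G hADne
    have h2 : (D.card : ℝ) ≤ 2 * AD.card := by exact_mod_cast hhalf'
    nlinarith
  obtain ⟨I₀, hI₀AD, hI₀ind, hI₀card⟩ := exists_indep_eq_indepNumOn G AD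
  obtain ⟨I', hI'I₀, hI'card⟩ := Finset.exists_subset_card_eq (by omega : t ≤ I₀.card)
  have hI'AD : I' ⊆ AD := hI'I₀.trans hI₀AD
  have hI'ind : ∀ u ∈ I', ∀ w ∈ I', ¬ G.Adj u w := fun u hu w hw =>
    hI₀ind u (hI'I₀ hu) w (hI'I₀ hw)
  have hI'D : ∀ a ∈ I', Sum.inl a ∈ D := by
    intro a ha
    have := hI'AD ha
    rw [hAD, Finset.mem_filter] at this
    exact this.2
  -- extend to P of size lv
  obtain ⟨P, hI'P, hPcard⟩ := Finset.exists_superset_card_eq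
    (show I'.card ≤ lv by omega) (by rw [hn]; exact hlvn)
  -- greedy colors for P \ I'
  set CI : Finset ℕ := I'.image (fun a => req (Sum.inl a)) with hCI
  have hCIt : CI.card ≤ t := by
    rw [hCI, ← hI'card]
    exact Finset.card_image_le
  set Q : Finset V := P \ I' with hQ
  have hQcard : Q.card = lv - t := by
    rw [hQ, Finset.card_sdiff_of_subset hI'P, hPcard, hI'card]
  obtain ⟨g₀, hg₀inj, hg₀mem⟩ := exists_injOn_mem_of_card_le
    (fun q => L (Sum.inl q) \ CI) Q (by
      intro q hq
      show Q.card ≤ (L (Sum.inl q) \ CI).card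
      have h1 : (L (Sum.inl q)).card - CI.card ≤ (L (Sum.inl q) \ CI).card :=
        Finset.le_card_sdiff _ _
      have h2 := hL (Sum.inl q)
      omega)
  set gpre : V → ℕ := fun v => if v ∈ I' then req (Sum.inl v) else g₀ v with hgpre
  set C : Finset ℕ := P.image gpre with hCdef
  have hCl : C.card ≤ lv := by
    rw [hCdef, ← hPcard]
    exact Finset.card_image_le
  -- apply the splitting lemma
  obtain ⟨A, hAleft, hAright⟩ := exists_good_split n s K lv hn (by omega) r hr hs1
    hKls hK2r hK1'' hlvn L hL C hCl P hPcard
  -- left and right colorings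
  obtain ⟨h, hhmem, hhadj⟩ := choosable_of_card_le G hch
    (fun v => if v ∈ P then L (Sum.inl v) else ((L (Sum.inl v) \ C) ∩ A)) (by
      intro v
      by_cases hv : v ∈ P
      · simp only [hv, if_true]
        rw [hL]
        omega
      · simp only [hv, if_false]
        exact hAleft v hv)
  obtain ⟨h', hh'mem, hh'adj⟩ := choosable_of_card_le G hch
    (fun w => (L (Sum.inr w) \ C) \ A) (fun w => hAright w)
  -- the final coloring
  set F : V ⊕ V → ℕ := Sum.elim (fun v => if v ∈ P then gpre v else h v) h' with hF
  -- key membership facts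
  have hgpre_mem : ∀ v ∈ P, gpre v ∈ L (Sum.inl v) := by
    intro v hv
    rw [hgpre]
    by_cases hvI : v ∈ I'
    · simp only [hvI, if_true]
      exact hreq _ (hI'D v hvI)
    · simp only [hvI, if_false]
      have hvQ : v ∈ Q := Finset.mem_sdiff.2 ⟨hv, hvI⟩
      exact (Finset.mem_sdiff.1 (hg₀mem v hvQ)).1
  have hgpre_C : ∀ v ∈ P, gpre v ∈ C := by
    intro v hv
    exact Finset.mem_image_of_mem _ hv
  have hh_mem : ∀ v, v ∉ P → h v ∈ (L (Sum.inl v) \ C) ∩ A := by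
    intro v hv
    have := hhmem v
    simpa [hv] using this
  have hh'_mem : ∀ w, h' w ∈ (L (Sum.inr w) \ C) \ A := fun w => hh'mem w
  refine ⟨F, ⟨?_, ?_⟩, ?_⟩
  · -- membership
    intro u
    rcases u with v | w
    · simp only [hF, Sum.elim_inl]
      by_cases hv : v ∈ P
      · simp only [hv, if_true]
        exact hgpre_mem v hv
      · simp only [hv, if_false]
        have := hh_mem v hv
        rw [Finset.mem_inter, Finset.mem_sdiff] at this
        exact this.1.1
    · simp only [hF, Sum.elim_inr]
      have := hh'_mem w
      rw [Finset.mem_sdiff, Finset.mem_sdiff] at this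
      exact this.1.1
  · -- properness
    intro u w hadj
    rcases u with a | a <;> rcases w with b | b
    · -- left-left
      have hGab : G.Adj a b := hadj
      have hne : a ≠ b := G.ne_of_adj hGab
      simp only [hF, Sum.elim_inl]
      by_cases ha : a ∈ P <;> by_cases hb : b ∈ P
      · simp only [ha, hb, if_true]
        by_cases haI : a ∈ I' <;> by_cases hbI : b ∈ I'
        · exact absurd hGab (hI'ind a haI b hbI)
        · -- a ∈ I', b ∈ Q
          have hbQ : b ∈ Q := Finset.mem_sdiff.2 ⟨hb, hbI⟩
          have h1 : gpre a = req (Sum.inl a) := by simp [hgpre, haI]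
          have h2 : gpre b = g₀ b := by simp [hgpre, hbI]
          have h3 : g₀ b ∉ CI := (Finset.mem_sdiff.1 (hg₀mem b hbQ)).2
          rw [h1, h2]
          intro heq
          exact h3 (heq ▸ Finset.mem_image_of_mem _ haI)
        · -- a ∈ Q, b ∈ I'
          have haQ : a ∈ Q := Finset.mem_sdiff.2 ⟨ha, haI⟩
          have h1 : gpre b = req (Sum.inl b) := by simp [hgpre, hbI]
          have h2 : gpre a = g₀ a := by simp [hgpre, haI]
          have h3 : g₀ a ∉ CI := (Finset.mem_sdiff.1 (hg₀mem a haQ)).2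
          rw [h1, h2]
          intro heq
          exact h3 (heq ▸ Finset.mem_image_of_mem _ hbI)
        · -- both in Q
          have haQ : a ∈ Q := Finset.mem_sdiff.2 ⟨ha, haI⟩
          have hbQ : b ∈ Q := Finset.mem_sdiff.2 ⟨hb, hbI⟩
          have h1 : gpre a = g₀ a := by simp [hgpre, haI]
          have h2 : gpre b = g₀ b := by simp [hgpre, hbI]
          rw [h1, h2]
          intro heq
          exact hne (hg₀inj haQ hbQ heq)
      · simp only [ha, hb, if_true, if_false]
        intro heq
        have h1 : gpre a ∈ C := hgpre_C a ha
        have h2 : h b ∉ C := by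
          have := hh_mem b hb
          rw [Finset.mem_inter, Finset.mem_sdiff] at this
          exact this.1.2
        exact h2 (heq ▸ h1)
      · simp only [ha, hb, if_true, if_false]
        intro heq
        have h1 : gpre b ∈ C := hgpre_C b hb
        have h2 : h a ∉ C := by
          have := hh_mem a ha
          rw [Finset.mem_inter, Finset.mem_sdiff] at this
          exact this.1.2
        exact h2 (heq.symm ▸ h1)
      · simp only [ha, hb, if_false]
        exact hhadj hGab
    · -- left-right
      simp only [hF, Sum.elim_inl, Sum.elim_inr]
      by_cases ha : a ∈ P
      · simp only [ha, if_true]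
        intro heq
        have h1 : gpre a ∈ C := hgpre_C a ha
        have h2 : h' b ∉ C := by
          have := hh'_mem b
          rw [Finset.mem_sdiff, Finset.mem_sdiff] at this
          exact this.1.2
        exact h2 (heq ▸ h1)
      · simp only [ha, if_false]
        intro heq
        have h1 : h a ∈ A := by
          have := hh_mem a ha
          rw [Finset.mem_inter] at this
          exact this.2
        have h2 : h' b ∉ A := by
          have := hh'_mem b
          rw [Finset.mem_sdiff] at this
          exact this.2
        exact h2 (heq ▸ h1)
    · -- right-left
      simp only [hF, Sum.elim_inl, Sum.elim_inr]
      by_cases hb : b ∈ P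
      · simp only [hb, if_true]
        intro heq
        have h1 : gpre b ∈ C := hgpre_C b hb
        have h2 : h' a ∉ C := by
          have := hh'_mem a
          rw [Finset.mem_sdiff, Finset.mem_sdiff] at this
          exact this.1.2
        exact h2 (heq.symm ▸ h1)
      · simp only [hb, if_false]
        intro heq
        have h1 : h b ∈ A := by
          have := hh_mem b hb
          rw [Finset.mem_inter] at this
          exact this.2
        have h2 : h' a ∉ A := by
          have := hh'_mem a
          rw [Finset.mem_sdiff] at this
          exact this.2
        exact h2 (heq.symm ▸ h1)
    · -- right-right
      exact hh'adj hadj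
  · -- requests satisfied
    have hsub : I'.map ⟨Sum.inl, Sum.inl_injective⟩ ⊆ D.filter (fun v => F v = req v) := by
      intro x hx
      simp only [Finset.mem_map, Function.Embedding.coeFn_mk] at hx
      obtain ⟨a, ha, rfl⟩ := hx
      rw [Finset.mem_filter]
      refine ⟨hI'D a ha, ?_⟩
      have haP : a ∈ P := hI'P ha
      simp only [hF, Sum.elim_inl, haP, if_true, hgpre, ha]
    have hcard : t ≤ (D.filter (fun v => F v = req v)).card := by
      rw [← hI'card, ← Finset.card_map (f := ⟨Sum.inl, Sum.inl_injective⟩)]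
      exact Finset.card_le_card hsub
    have h1 : (1 : ℝ) / (2 * ρ) * D.card = (D.card : ℝ) / (2 * ρ) := by ring
    rw [h1]
    refine le_trans (Nat.le_ceil _) ?_
    exact_mod_cast hcard

end Core


section Final

open Finset

lemma joinCopies_adj_swap {V : Type*} (G : SimpleGraph V) (u w : V ⊕ V)
    (h : (joinCopies G).Adj u w) : (joinCopies G).Adj (u.swap) (w.swap) := by
  rcases u with a | a <;> rcases w with b | b <;> simp_all [Sum.swap]

lemma flex_joinCopies {V : Type*} [Fintype V] [DecidableEq V] [Nonempty V] (G : SimpleGraph V)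
    (n s K : ℕ) (hn : Fintype.card V = n) (hn2 : 2 ≤ n) (hch : Choosable G s)
    (r : ℝ) (hr : 2 < r)
    (hK1 : (⌈(↑(⌈(n : ℝ) / hallRatio G⌉₊) : ℝ) +
      Real.logb 2 (2 * (n : ℝ) - ↑(⌈(n : ℝ) / hallRatio G⌉₊)) /
        (1 - binEnt (1 / r))⌉₊ : ℕ) ≤ K)
    (hK2 : (⌈r * ((s : ℝ) - 1) + ↑(⌈(n : ℝ) / hallRatio G⌉₊)⌉₊ : ℕ) ≤ K) :
    Flexible (joinCopies G) K (1 / (2 * hallRatio G)) := by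
  intro L hL D req hD hreq
  by_cases hhalf : D.card ≤ 2 * (D.filter (fun x => x.isLeft)).card
  · obtain ⟨f, hf1, hf2⟩ := core_left G n s K hn hn2 hch r hr hK1 hK2 L hL D req hD hreq hhalf
    exact ⟨f, hf1, hf2⟩
  · -- swap the two sides
    set e : V ⊕ V ↪ V ⊕ V := ⟨Sum.swap, fun a b h => by
      rw [← Sum.swap_swap a, ← Sum.swap_swap b, h]⟩ with he
    set L' : V ⊕ V → Finset ℕ := fun u => L u.swap with hL'def
    set D' : Finset (V ⊕ V) := D.map e with hD'def
    set req' : V ⊕ V → ℕ := fun u => req u.swap with hreq'def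
    have hL' : ∀ v, (L' v).card = K := fun v => hL v.swap
    have hD' : D'.Nonempty := by
      obtain ⟨d, hd⟩ := hD
      exact ⟨e d, Finset.mem_map_of_mem e hd⟩
    have hreq' : ∀ v ∈ D', req' v ∈ L' v := by
      intro v hv
      rw [hD'def, Finset.mem_map] at hv
      obtain ⟨d, hd, rfl⟩ := hv
      have : e d = d.swap := rfl
      rw [this]
      simpa [hL'def, hreq'def, Sum.swap_swap] using hreq d hd
    have hfilterswap : ∀ (p : V ⊕ V → Prop) [DecidablePred p],
        (D'.filter p).card = (D.filter (fun x => p x.swap)).card := by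
      intro p _
      rw [hD'def, Finset.filter_map, Finset.card_map]
      congr 1
    have hsplit : (D.filter (fun x => x.isLeft)).card +
        (D.filter (fun x => x.isRight)).card = D.card := by
      have h1 := Finset.card_filter_add_card_filter_not
        (s := D) (p := fun x => x.isLeft = true)
      have h2 : D.filter (fun a => ¬ (a.isLeft = true)) = D.filter (fun x => x.isRight) := by
        refine Finset.filter_congr fun x _ => ?_
        rcases x with a | a <;> simp
      rw [h2] at h1
      exact h1
    have hhalf' : D'.card ≤ 2 * (D'.filter (fun x => x.isLeft)).card := by
      have h1 : (D'.filter (fun x => x.isLeft)).card =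
          (D.filter (fun x => x.isRight)).card := by
        rw [hfilterswap]
        congr 1
        refine Finset.filter_congr fun x _ => ?_
        rcases x with a | a <;> simp [Sum.swap]
      rw [hD'def, Finset.card_map, h1]
      omega
    obtain ⟨f, ⟨hf1, hf2⟩, hf3⟩ := core_left G n s K hn hn2 hch r hr hK1 hK2 L' hL'
      D' req' hD' hreq' hhalf'
    refine ⟨fun u => f u.swap, ⟨?_, ?_⟩, ?_⟩
    · intro v
      have h := hf1 v.swap
      simp only [hL'def, Sum.swap_swap] at h
      exact h
    · intro u w hadj
      exact hf2 (joinCopies_adj_swap G u w hadj)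
    · have hc : (D'.filter (fun v => f v = req' v)).card =
          (D.filter (fun v => f v.swap = req v)).card := by
        rw [hfilterswap]
        congr 1
        refine Finset.filter_congr fun x _ => ?_
        simp [hreq'def, Sum.swap_swap]
      rw [hc, hD'def, Finset.card_map] at hf3
      exact hf3

end Final

/-- bound on the list flexibility number of the join of two
copies of an n-vertex s-choosable graph. -/
theorem stmt17 {V : Type*} [Fintype V] (G : SimpleGraph V) (n s m : ℕ)
    (hn : Fintype.card V = n) (hn2 : 2 ≤ n) (hch : Choosable G s)
    (hm : flexNumber G = m) (r : ℝ) (hr : 2 < r) :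
    flexNumber (joinCopies G) ≤
      max (max ⌈(⌈(n : ℝ) / hallRatio G⌉₊ : ℝ) +
            Real.logb 2 (2 * (n : ℝ) - (⌈(n : ℝ) / hallRatio G⌉₊ : ℝ)) /
              (1 - binEnt (1 / r))⌉₊
          ⌈r * ((s : ℝ) - 1) + (⌈(n : ℝ) / hallRatio G⌉₊ : ℝ)⌉₊) m ∧
    Flexible (joinCopies G)
      (max (max ⌈(⌈(n : ℝ) / hallRatio G⌉₊ : ℝ) +
            Real.logb 2 (2 * (n : ℝ) - (⌈(n : ℝ) / hallRatio G⌉₊ : ℝ)) /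
              (1 - binEnt (1 / r))⌉₊
          ⌈r * ((s : ℝ) - 1) + (⌈(n : ℝ) / hallRatio G⌉₊ : ℝ)⌉₊) m)
      (1 / (2 * hallRatio G)) := by
  classical
  have hNV : Nonempty V := by
    have : 0 < Fintype.card V := by omega
    exact Fintype.card_pos_iff.1 this
  set c1 : ℕ := ⌈(⌈(n : ℝ) / hallRatio G⌉₊ : ℝ) +
      Real.logb 2 (2 * (n : ℝ) - (⌈(n : ℝ) / hallRatio G⌉₊ : ℝ)) /
        (1 - binEnt (1 / r))⌉₊ with hc1
  set c2 : ℕ := ⌈r * ((s : ℝ) - 1) + (⌈(n : ℝ) / hallRatio G⌉₊ : ℝ)⌉₊ with hc2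
  have hflex : Flexible (joinCopies G) (max (max c1 c2) m) (1 / (2 * hallRatio G)) :=
    flex_joinCopies G n s (max (max c1 c2) m) hn hn2 hch r hr
      (le_trans (le_max_left c1 c2) (le_max_left _ m))
      (le_trans (le_max_right c1 c2) (le_max_left _ m))
  refine ⟨?_, hflex⟩
  refine Nat.sInf_le ?_
  show Flexible (joinCopies G) (max (max c1 c2) m) (1 / hallRatio (joinCopies G))
  refine flexible_anti _ ?_ hflex
  have h2ρ : 2 * hallRatio G ≤ hallRatio (joinCopies G) := two_mul_hallRatio_le G
  have hpos : 0 < 2 * hallRatio G := by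
    have := hallRatio_pos G
    linarith
  exact one_div_le_one_div_of_le hpos h2ρ
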